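/- arXiv:2506.00627 — 2 statements merged into one kernel-verified Lean document; each statement's English description precedes it below -/
import Mathlib

section
/- Let γ > 0, m > 0, and c, b, a ∈ R with c = ‖k* - k₀‖² ≥ 0. Define F_u(σ) = -(β(σ)²/2)(c + σ²m) + β(σ)c + (k₀ᵀk* - k₀ᵀk₀/2), where β(σ) = γ²/(γ²+σ²). Then F_u'(σ) = (σγ²/(γ²+σ²)³)·[(mγ² - 2c)σ² - mγ⁴]. Consequently, if γ² ≤ 2c/m, F_u is strictly decreasing on (0,∞); if γ² > 2c/m, F_u attains a global minimum at σ_min = γ·sqrt(mγ²/(mγ² - 2c)), decreasing on (0, σ_min) and increasing on (σ_min, ∞). -/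
/-!
Writing `P = mγ² - 2c`, the derivative of `F_u` is a positive multiple of `Pσ² - mγ⁴` for
`σ > 0`. If `P ≤ 0` this is always negative; if `P > 0` it changes sign exactly once, at the
point `σ_min` where `Pσ_min² = mγ⁴`. Since `F_u` is even, being decreasing on `[0, σ_min]` and
increasing on `[σ_min, ∞)` makes `σ_min` a global minimum.
-/

open Matrix Set

theorem Function.Even.le_of_antitoneOn_of_monotoneOn {f : ℝ → ℝ} (heven : Function.Even f)
    {s : ℝ} (hs : 0 ≤ s) (hanti : AntitoneOn f (Icc 0 s)) (hmono : MonotoneOn f (Ici s))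
    (x : ℝ) : f s ≤ f x := by
  have habs : f |x| = f x := by
    rcases abs_choice x with h | h <;> rw [h]
    exact heven x
  rw [← habs]
  rcases le_total |x| s with h | h
  · exact hanti ⟨abs_nonneg x, h⟩ ⟨hs, le_rfl⟩ h
  · exact hmono (mem_Ici.2 le_rfl) h h

noncomputable section

def bayesShrinkage (γ σ : ℝ) : ℝ := γ ^ 2 / (γ ^ 2 + σ ^ 2)

/-- The paper's `F_u`, with the constant `k₀ᵀk* - k₀ᵀk₀/2` abstracted to `K`. -/
def utilityDisparity (γ m c K σ : ℝ) : ℝ :=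
  -(bayesShrinkage γ σ ^ 2 / 2) * (c + σ ^ 2 * m) + bayesShrinkage γ σ * c + K

/-- The paper's `σ_min`; a junk value unless `mγ² > 2c`. -/
def criticalNoise (γ m c : ℝ) : ℝ := γ * Real.sqrt (m * γ ^ 2 / (m * γ ^ 2 - 2 * c))

end

section UtilityDisparity

variable {γ m c K : ℝ}

theorem utilityDisparity_even : Function.Even (utilityDisparity γ m c K) := fun σ => by
  simp only [utilityDisparity, bayesShrinkage, neg_sq]

theorem hasDerivAt_utilityDisparity (hγ : γ ≠ 0) (σ : ℝ) :
    HasDerivAt (utilityDisparity γ m c K)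
      (σ * γ ^ 2 / (γ ^ 2 + σ ^ 2) ^ 3 * ((m * γ ^ 2 - 2 * c) * σ ^ 2 - m * γ ^ 4)) σ := by
  have hD : γ ^ 2 + σ ^ 2 ≠ 0 := by positivity
  have hden : HasDerivAt (fun x : ℝ => γ ^ 2 + x ^ 2) (2 * σ) σ := by
    simpa using (hasDerivAt_pow 2 σ).const_add (γ ^ 2)
  have hβ : HasDerivAt (bayesShrinkage γ)
      ((0 * (γ ^ 2 + σ ^ 2) - γ ^ 2 * (2 * σ)) / (γ ^ 2 + σ ^ 2) ^ 2) σ :=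
    (hasDerivAt_const σ (γ ^ 2)).div hden hD
  have hvar : HasDerivAt (fun x : ℝ => c + x ^ 2 * m) (2 * σ * m) σ := by
    simpa using ((hasDerivAt_pow 2 σ).mul_const m).const_add c
  refine ((((hβ.pow 2).div_const 2).neg.mul hvar).add (hβ.mul_const c)).add_const K
    |>.congr_deriv ?_
  simp only [bayesShrinkage, Pi.neg_apply, Pi.pow_apply]
  norm_num only [Nat.cast_ofNat, Nat.add_one_sub_one, pow_one, zero_mul, zero_sub]
  field_simp
  ring

theorem continuous_utilityDisparity (hγ : γ ≠ 0) : Continuous (utilityDisparity γ m c K) :=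
  continuous_iff_continuousAt.2 fun σ =>
    (hasDerivAt_utilityDisparity (m := m) (c := c) (K := K) hγ σ).continuousAt

theorem strictAntiOn_utilityDisparity (hγ : γ ≠ 0) {S : Set ℝ} (hS : Convex ℝ S)
    (hneg : ∀ σ ∈ interior S, 0 < σ ∧ (m * γ ^ 2 - 2 * c) * σ ^ 2 < m * γ ^ 4) :
    StrictAntiOn (utilityDisparity γ m c K) S := by
  refine strictAntiOn_of_deriv_neg hS (continuous_utilityDisparity hγ).continuousOn
    fun σ hσ => ?_
  obtain ⟨hσ0, hsign⟩ := hneg σ hσ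
  rw [(hasDerivAt_utilityDisparity hγ σ).deriv]
  exact mul_neg_of_pos_of_neg (by positivity) (sub_neg.2 hsign)

theorem strictMonoOn_utilityDisparity (hγ : γ ≠ 0) {S : Set ℝ} (hS : Convex ℝ S)
    (hpos : ∀ σ ∈ interior S, 0 < σ ∧ m * γ ^ 4 < (m * γ ^ 2 - 2 * c) * σ ^ 2) :
    StrictMonoOn (utilityDisparity γ m c K) S := by
  refine strictMonoOn_of_deriv_pos hS (continuous_utilityDisparity hγ).continuousOn
    fun σ hσ => ?_
  obtain ⟨hσ0, hsign⟩ := hpos σ hσ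
  rw [(hasDerivAt_utilityDisparity hγ σ).deriv]
  exact mul_pos (by positivity) (sub_pos.2 hsign)

theorem criticalNoise_pos (hγ : 0 < γ) (hm : 0 < m) (hP : 0 < m * γ ^ 2 - 2 * c) :
    0 < criticalNoise γ m c :=
  mul_pos hγ (Real.sqrt_pos.2 (by positivity))

theorem mul_criticalNoise_sq (hm : 0 < m) (hP : 0 < m * γ ^ 2 - 2 * c) :
    (m * γ ^ 2 - 2 * c) * criticalNoise γ m c ^ 2 = m * γ ^ 4 := by
  rw [criticalNoise, mul_pow, Real.sq_sqrt (by positivity)]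
  field_simp

theorem strictAntiOn_utilityDisparity_Ici_zero (hγ : γ ≠ 0) (hm : 0 < m)
    (hP : m * γ ^ 2 - 2 * c ≤ 0) : StrictAntiOn (utilityDisparity γ m c K) (Ici 0) := by
  refine strictAntiOn_utilityDisparity hγ (convex_Ici 0) fun σ hσ => ?_
  rw [interior_Ici] at hσ
  refine ⟨hσ, ?_⟩
  linarith [mul_nonpos_of_nonpos_of_nonneg hP (sq_nonneg σ),
    show 0 < m * γ ^ 4 by positivity]

theorem strictAntiOn_utilityDisparity_Icc_criticalNoise (hγ : 0 < γ) (hm : 0 < m)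
    (hP : 0 < m * γ ^ 2 - 2 * c) :
    StrictAntiOn (utilityDisparity γ m c K) (Icc 0 (criticalNoise γ m c)) := by
  refine strictAntiOn_utilityDisparity hγ.ne' (convex_Icc _ _) fun σ hσ => ?_
  rw [interior_Icc] at hσ
  refine ⟨hσ.1, ?_⟩
  rw [← mul_criticalNoise_sq hm hP]
  exact mul_lt_mul_of_pos_left (pow_lt_pow_left₀ hσ.2 hσ.1.le two_ne_zero) hP

theorem strictMonoOn_utilityDisparity_Ici_criticalNoise (hγ : 0 < γ) (hm : 0 < m)
    (hP : 0 < m * γ ^ 2 - 2 * c) :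
    StrictMonoOn (utilityDisparity γ m c K) (Ici (criticalNoise γ m c)) := by
  have hσmin := criticalNoise_pos hγ hm hP
  refine strictMonoOn_utilityDisparity hγ.ne' (convex_Ici _) fun σ hσ => ?_
  rw [interior_Ici] at hσ
  refine ⟨hσmin.trans hσ, ?_⟩
  rw [← mul_criticalNoise_sq hm hP]
  exact mul_lt_mul_of_pos_left (pow_lt_pow_left₀ hσ hσmin.le two_ne_zero) hP

theorem utilityDisparity_criticalNoise_le (hγ : 0 < γ) (hm : 0 < m)
    (hP : 0 < m * γ ^ 2 - 2 * c) (σ : ℝ) :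
    utilityDisparity γ m c K (criticalNoise γ m c) ≤ utilityDisparity γ m c K σ :=
  utilityDisparity_even.le_of_antitoneOn_of_monotoneOn (criticalNoise_pos hγ hm hP).le
    (strictAntiOn_utilityDisparity_Icc_criticalNoise hγ hm hP).antitoneOn
    (strictMonoOn_utilityDisparity_Ici_criticalNoise hγ hm hP).monotoneOn σ

end UtilityDisparity

/-- Utility disparity for Bayesian agents with common prior: with
`c = ‖k* - k₀‖²`, `β(σ) = γ²/(γ²+σ²)`, `m > 0` and
`F_u(σ) = -(β(σ)²/2)(c + σ²m) + β(σ)c + (k₀ᵀk* - k₀ᵀk₀/2)`, the derivative is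
`F_u'(σ) = (σγ²/(γ²+σ²)³)·[(mγ² - 2c)σ² - mγ⁴]`. Consequently, if `γ² ≤ 2c/m` then `F_u`
is strictly decreasing on `(0,∞)`; if `γ² > 2c/m` then `F_u` attains a global minimum at
`σ_min = γ·√(mγ²/(mγ² - 2c))`, being strictly decreasing on `(0, σ_min)` and strictly
increasing on `(σ_min, ∞)`. -/
theorem bayesian_utility_disparity_shape {d : ℕ} (k₀ ks : Fin d → ℝ)
    (γ m : ℝ) (hγ : 0 < γ) (hm : 0 < m) :
    let c : ℝ := (ks - k₀) ⬝ᵥ (ks - k₀)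
    let β : ℝ → ℝ := fun σ => γ ^ 2 / (γ ^ 2 + σ ^ 2)
    let Fu : ℝ → ℝ := fun σ =>
      -(β σ ^ 2 / 2) * (c + σ ^ 2 * m) + β σ * c + (k₀ ⬝ᵥ ks - k₀ ⬝ᵥ k₀ / 2)
    let σmin : ℝ := γ * Real.sqrt (m * γ ^ 2 / (m * γ ^ 2 - 2 * c))
    (∀ σ : ℝ, HasDerivAt Fu
      (σ * γ ^ 2 / (γ ^ 2 + σ ^ 2) ^ 3 * ((m * γ ^ 2 - 2 * c) * σ ^ 2 - m * γ ^ 4)) σ) ∧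
    (γ ^ 2 ≤ 2 * c / m → StrictAntiOn Fu (Set.Ioi 0)) ∧
    (γ ^ 2 > 2 * c / m →
      (∀ σ : ℝ, Fu σmin ≤ Fu σ) ∧
      StrictAntiOn Fu (Set.Ioo 0 σmin) ∧
      StrictMonoOn Fu (Set.Ioi σmin)) := by
  intro c β Fu σmin
  refine ⟨hasDerivAt_utilityDisparity hγ.ne', fun h => ?_, fun h => ?_⟩
  · have hP : m * γ ^ 2 - 2 * c ≤ 0 := by linarith [(le_div_iff₀ hm).1 h]
    exact (strictAntiOn_utilityDisparity_Ici_zero hγ.ne' hm hP).mono Ioi_subset_Ici_self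
  · have hP : 0 < m * γ ^ 2 - 2 * c := by linarith [(div_lt_iff₀ hm).1 h]
    exact ⟨utilityDisparity_criticalNoise_le hγ hm hP,
      (strictAntiOn_utilityDisparity_Icc_criticalNoise hγ hm hP).mono Ioo_subset_Icc_self,
      (strictMonoOn_utilityDisparity_Ici_criticalNoise hγ hm hP).mono Ioi_subset_Ici_self⟩
end

section
/- With F_u as in the Bayesian common-prior utility disparity, F_u(0) = k*ᵀk*/2 and lim_{σ→∞} F_u(σ) = k₀ᵀk* - k₀ᵀk₀/2. Moreover, in the monotone regime (γ ≤ sqrt(2/m)·‖k*-k₀‖ with k* ≠ k₀ and k*ᵀk* > 0): if k₀ᵀk₀ > 2k₀ᵀk*, then F_u has a unique zero in (0,∞); if k₀ᵀk₀ ≤ 2k₀ᵀk*, then F_u(σ) > 0 for all σ ≥ 0. -/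
open Matrix Filter

set_option maxHeartbeats 1000000 in
/-- Boundary values and monotone-regime zeros of the Bayesian common-prior utility
disparity `F_u(σ) = -(β(σ)²/2)(‖k*-k₀‖² + σ²m) + β(σ)‖k*-k₀‖² + (k₀ᵀk* - k₀ᵀk₀/2)`:
`F_u(0) = k*ᵀk*/2`, `F_u(σ) → k₀ᵀk* - k₀ᵀk₀/2` as `σ → ∞`; and in the monotone regime
(`γ ≤ √(2/m)·‖k*-k₀‖` with `k* ≠ k₀` and `k*ᵀk* > 0`): if `k₀ᵀk₀ > 2k₀ᵀk*` then `F_u`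
has a unique zero in `(0,∞)`, while if `k₀ᵀk₀ ≤ 2k₀ᵀk*` then `F_u(σ) > 0` for all
`σ ≥ 0`. -/
theorem bayesian_utility_disparity_zeros {d : ℕ} (k₀ ks : Fin d → ℝ)
    (γ m : ℝ) (hγ : 0 < γ) (hm : 0 < m) :
    let c : ℝ := (ks - k₀) ⬝ᵥ (ks - k₀)
    let β : ℝ → ℝ := fun σ => γ ^ 2 / (γ ^ 2 + σ ^ 2)
    let Fu : ℝ → ℝ := fun σ =>
      -(β σ ^ 2 / 2) * (c + σ ^ 2 * m) + β σ * c + (k₀ ⬝ᵥ ks - k₀ ⬝ᵥ k₀ / 2)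
    Fu 0 = (ks ⬝ᵥ ks) / 2 ∧
    Tendsto Fu atTop (nhds (k₀ ⬝ᵥ ks - k₀ ⬝ᵥ k₀ / 2)) ∧
    (ks ≠ k₀ → 0 < ks ⬝ᵥ ks → γ ≤ Real.sqrt (2 / m) * Real.sqrt c →
      ((k₀ ⬝ᵥ k₀ > 2 * (k₀ ⬝ᵥ ks) → ∃! σ : ℝ, 0 < σ ∧ Fu σ = 0) ∧
       (k₀ ⬝ᵥ k₀ ≤ 2 * (k₀ ⬝ᵥ ks) → ∀ σ : ℝ, 0 ≤ σ → 0 < Fu σ))) := by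
  intro c β Fu
  have hγ2 : (0:ℝ) < γ ^ 2 := by positivity
  have hden : ∀ σ : ℝ, (0:ℝ) < γ ^ 2 + σ ^ 2 := fun σ => by positivity
  set D : ℝ := k₀ ⬝ᵥ ks - k₀ ⬝ᵥ k₀ / 2 with hD
  -- dot-product identity
  have hc_id : c = ks ⬝ᵥ ks - 2 * (k₀ ⬝ᵥ ks) + k₀ ⬝ᵥ k₀ := by
    have h1 : c = ks ⬝ᵥ ks - k₀ ⬝ᵥ ks - (ks ⬝ᵥ k₀ - k₀ ⬝ᵥ k₀) := by
      simp only [c, sub_dotProduct, dotProduct_sub]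
    rw [h1, dotProduct_comm ks k₀]; ring
  have hc_nn : 0 ≤ c := Fintype.sum_nonneg fun i => mul_self_nonneg _
  -- β facts
  have hβpos : ∀ σ : ℝ, 0 < β σ := fun σ => div_pos hγ2 (hden σ)
  have hβle : ∀ σ : ℝ, β σ ≤ 1 := fun σ => by
    rw [div_le_one (hden σ)]; nlinarith [sq_nonneg σ]
  have hβ0 : β 0 = 1 := by simp [β, hγ2.ne']
  -- Part 1
  have part1 : Fu 0 = (ks ⬝ᵥ ks) / 2 := by
    simp only [Fu, hβ0, hD]; rw [hc_id]; ring
  refine ⟨part1, ?_, ?_⟩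
  · -- limit at ∞
    have hβσ : ∀ σ : ℝ, β σ * σ ^ 2 = γ ^ 2 - γ ^ 2 * β σ := by
      intro σ
      have h := (hden σ).ne'
      simp only [β]
      field_simp
      ring
    have hFeq : ∀ σ : ℝ, Fu σ =
        -(β σ * (β σ * c + (γ ^ 2 - γ ^ 2 * β σ) * m)) / 2 + β σ * c + D := by
      intro σ
      simp only [Fu]
      rw [← hβσ σ]; ring
    have hβlim : Tendsto β atTop (nhds 0) := by
      apply Tendsto.div_atTop (tendsto_const_nhds (x := γ ^ 2))
      exact tendsto_atTop_add_const_left _ _ (tendsto_pow_atTop (two_ne_zero))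
    have : Tendsto (fun σ => -(β σ * (β σ * c + (γ ^ 2 - γ ^ 2 * β σ) * m)) / 2
        + β σ * c + D) atTop (nhds (-(0 * (0 * c + (γ ^ 2 - γ ^ 2 * 0) * m)) / 2
        + 0 * c + D)) := by
      exact ((((hβlim.mul ((hβlim.mul_const c).add
        ((tendsto_const_nhds.sub (hβlim.const_mul (γ ^ 2))).mul_const m))).neg.div_const
        2).add (hβlim.mul_const c)).add tendsto_const_nhds)
    have h0 : (-(0 * (0 * c + (γ ^ 2 - γ ^ 2 * 0) * m)) / 2 + 0 * c + D) = D := by ring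
    rw [h0] at this
    exact this.congr (fun σ => (hFeq σ).symm)
  · -- monotone regime
    intro hne hks hγle
    have hc_pos : 0 < c := by
      have hv : ks - k₀ ≠ 0 := sub_ne_zero.mpr hne
      exact hc_nn.lt_of_ne (fun h => hv (dotProduct_self_eq_zero.mp h.symm))
    -- squared condition : m * γ^2 ≤ 2 * c
    have hmg : m * γ ^ 2 ≤ 2 * c := by
      have h1 : γ ^ 2 ≤ (Real.sqrt (2 / m) * Real.sqrt c) ^ 2 := by
        apply pow_le_pow_left₀ hγ.le hγle 2
      have h2 : (Real.sqrt (2 / m) * Real.sqrt c) ^ 2 = (2 / m) * c := by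
        rw [mul_pow, Real.sq_sqrt (by positivity), Real.sq_sqrt hc_nn]
      rw [h2] at h1
      rw [div_mul_eq_mul_div, le_div_iff₀ hm] at h1
      linarith
    set a : ℝ := c - m * γ ^ 2 with ha
    set b : ℝ := c - m * γ ^ 2 / 2 with hb
    have hb_nn : 0 ≤ b := by simp only [hb]; linarith
    have hba : b - a = m * γ ^ 2 / 2 := by simp only [ha, hb]; ring
    have hba_pos : 0 < b - a := by rw [hba]; positivity
    -- Fu as a function of β
    have hβσ : ∀ σ : ℝ, β σ * σ ^ 2 = γ ^ 2 - γ ^ 2 * β σ := by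
      intro σ
      have h := (hden σ).ne'
      simp only [β]
      field_simp
      ring
    have hFg : ∀ σ : ℝ, Fu σ = -(β σ ^ 2 / 2) * a + β σ * b + D := by
      intro σ
      simp only [Fu]
      have h : β σ ^ 2 * σ ^ 2 = β σ * (γ ^ 2 - γ ^ 2 * β σ) := by
        rw [← hβσ σ]; ring
      have : β σ ^ 2 * (c + σ ^ 2 * m) = β σ ^ 2 * c + β σ * (γ ^ 2 - γ ^ 2 * β σ) * m := by
        rw [← h]; ring
      rw [show -(β σ ^ 2 / 2) * (c + σ ^ 2 * m) = -(β σ ^ 2 * (c + σ ^ 2 * m)) / 2 by ring,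
        this]
      simp only [ha, hb]; ring
    -- g strictly increasing on (0,1]
    have hg_mono : ∀ x y : ℝ, 0 < x → x < y → y ≤ 1 →
        -(x ^ 2 / 2) * a + x * b < -(y ^ 2 / 2) * a + y * b := by
      intro x y hx hxy hy1
      have h1 : -(y ^ 2 / 2) * a + y * b - (-(x ^ 2 / 2) * a + x * b)
          = (y - x) * (b - a * (x + y) / 2) := by ring
      have h2 : 0 < b - a * (x + y) / 2 := by
        rcases le_or_gt a 0 with hA | hA
        · nlinarith
        · nlinarith
      nlinarith [mul_pos (sub_pos.mpr hxy) h2]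
    -- β strictly decreasing on [0,∞)
    have hβanti : ∀ x y : ℝ, 0 ≤ x → x < y → β y < β x := by
      intro x y hx hxy
      show γ ^ 2 / (γ ^ 2 + y ^ 2) < γ ^ 2 / (γ ^ 2 + x ^ 2)
      apply div_lt_div_of_pos_left hγ2 (hden x)
      nlinarith
    -- Fu strictly decreasing on [0,∞)
    have hFanti : ∀ x y : ℝ, 0 ≤ x → x < y → Fu y < Fu x := by
      intro x y hx hxy
      rw [hFg x, hFg y]
      have := hg_mono (β y) (β x) (hβpos y) (hβanti x y hx hxy) (hβle x)
      linarith
    -- Fu σ > D for σ ≥ 0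
    have hFgtD : ∀ σ : ℝ, 0 ≤ σ → D < Fu σ := by
      intro σ hσ
      rw [hFg σ]
      have hβp := hβpos σ
      have hβ1 := hβle σ
      have key : 0 < b - a * β σ / 2 := by
        rcases le_or_gt a 0 with hA | hA
        · rcases eq_or_lt_of_le hb_nn with hb0 | hb0
          · nlinarith
          · nlinarith
        · nlinarith
      nlinarith [mul_pos hβp key]
    refine ⟨?_, ?_⟩
    · -- unique zero when D < 0
      intro hDneg
      have hD_neg : D < 0 := by simp only [hD]; linarith
      have hF0 : 0 < Fu 0 := by rw [part1]; positivity
      -- continuity of Fu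
      have hβcont : Continuous β := by
        apply Continuous.div continuous_const (by continuity)
        intro x; exact (hden x).ne'
      have hFcont : Continuous Fu := by
        apply Continuous.add
        apply Continuous.add
        · exact ((hβcont.pow 2).div_const 2).neg.mul (by continuity)
        · exact hβcont.mul continuous_const
        · exact continuous_const
      -- limit
      have hβlim : Tendsto β atTop (nhds 0) := by
        apply Tendsto.div_atTop (tendsto_const_nhds (x := γ ^ 2))
        exact tendsto_atTop_add_const_left _ _ (tendsto_pow_atTop (two_ne_zero))
      have hFeq : ∀ σ : ℝ, Fu σ =
          -(β σ * (β σ * c + (γ ^ 2 - γ ^ 2 * β σ) * m)) / 2 + β σ * c + D := by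
        intro σ
        simp only [Fu]
        rw [← hβσ σ]; ring
      have hFlim : Tendsto Fu atTop (nhds D) := by
        have : Tendsto (fun σ => -(β σ * (β σ * c + (γ ^ 2 - γ ^ 2 * β σ) * m)) / 2
            + β σ * c + D) atTop (nhds (-(0 * (0 * c + (γ ^ 2 - γ ^ 2 * 0) * m)) / 2
            + 0 * c + D)) :=
          ((((hβlim.mul ((hβlim.mul_const c).add
            ((tendsto_const_nhds.sub (hβlim.const_mul (γ ^ 2))).mul_const m))).neg.div_const
            2).add (hβlim.mul_const c)).add tendsto_const_nhds)
        have h0 : (-(0 * (0 * c + (γ ^ 2 - γ ^ 2 * 0) * m)) / 2 + 0 * c + D) = D := by ring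
        rw [h0] at this
        exact this.congr (fun σ => (hFeq σ).symm)
      -- find a point where Fu < 0
      obtain ⟨T, hT⟩ : ∃ T : ℝ, 1 ≤ T ∧ Fu T < 0 := by
        have hev : ∀ᶠ σ in atTop, Fu σ < 0 :=
          hFlim.eventually (eventually_lt_nhds hD_neg)
        obtain ⟨T, hT⟩ := (hev.and (eventually_ge_atTop 1)).exists
        exact ⟨T, hT.2, hT.1⟩
      have hT0 : (0:ℝ) < T := lt_of_lt_of_le one_pos hT.1
      -- IVT
      obtain ⟨σ₀, hσ₀mem, hσ₀⟩ : ∃ σ₀ ∈ Set.Ioo (0:ℝ) T, Fu σ₀ = 0 := by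
        have := intermediate_value_Ioo' (le_of_lt hT0) hFcont.continuousOn
          (a := 0) (b := T)
        have h0mem : (0:ℝ) ∈ Set.Ioo (Fu T) (Fu 0) := ⟨hT.2, hF0⟩
        obtain ⟨σ₀, hmem, heq⟩ := this h0mem
        exact ⟨σ₀, hmem, heq⟩
      refine ⟨σ₀, ⟨hσ₀mem.1, hσ₀⟩, ?_⟩
      rintro σ₁ ⟨hσ₁pos, hσ₁⟩
      by_contra hne'
      rcases lt_or_gt_of_ne hne' with h | h
      · have := hFanti σ₁ σ₀ hσ₁pos.le h
        rw [hσ₀, hσ₁] at this; exact lt_irrefl 0 this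
      · have := hFanti σ₀ σ₁ hσ₀mem.1.le h
        rw [hσ₀, hσ₁] at this; exact lt_irrefl 0 this
    · -- positivity when D ≥ 0
      intro hDge σ hσ
      have hD_nn : 0 ≤ D := by simp only [hD]; linarith
      exact lt_of_le_of_lt hD_nn (hFgtD σ hσ)
end
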